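/- If f is the CDF of N(0, σ²), then for all real a and b, log(f(b)) - log(f(a)) ≥ (f'(a)/f(a))·(b - a) - (1/(2σ²))·(b - a)². -/

import Mathlib

open Real Set

noncomputable def stdNormalPDF (t : ℝ) : ℝ := (Real.sqrt (2 * Real.pi))⁻¹ * Real.exp (-t ^ 2 / 2)

noncomputable def stdNormalCDF (x : ℝ) : ℝ := ∫ t in Set.Iic x, stdNormalPDF t

/-!
Write `Φ = stdNormalCDF` and `φ = stdNormalPDF`. Substituting `u = x / σ` reduces the claim to
the tangent-line inequality for `L u = log Φ u + u² / 2`, so it suffices that `L' = φ / Φ + u`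
is monotone. Its derivative is `G / Φ²` with `G = Φ² - φ² - u φ Φ`. Both `G` and
`M = Φ + u φ / (1 + u²)` tend to `0` at `-∞`, `M' = 2 φ / (1 + u²)² ≥ 0` gives `M ≥ 0`,
and then `G' = φ (1 + u²) M ≥ 0` gives `G ≥ 0`.
-/

open MeasureTheory Filter Topology

lemma mul_sub_le_sub_of_hasDerivAt_of_monotone {F F' : ℝ → ℝ}
    (hF : ∀ x, HasDerivAt F (F' x) x) (hF' : Monotone F') (u v : ℝ) :
    F' u * (v - u) ≤ F v - F u := by
  have hderiv : deriv F = F' := funext fun x => (hF x).deriv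
  have hconv : ConvexOn ℝ univ F :=
    Monotone.convexOn_univ_of_deriv (fun x => (hF x).differentiableAt) (hderiv ▸ hF')
  rcases lt_trichotomy u v with huv | rfl | hvu
  · have := hconv.le_slope_of_hasDerivAt (mem_univ u) (mem_univ v) huv (hF u)
    rw [slope_def_field, le_div_iff₀ (sub_pos.2 huv)] at this
    exact this
  · simp
  · have := hconv.slope_le_of_hasDerivAt (mem_univ v) (mem_univ u) hvu (hF u)
    rw [slope_def_field, div_le_iff₀ (sub_pos.2 hvu)] at this
    linarith

lemma stdNormalPDF_pos (x : ℝ) : 0 < stdNormalPDF x := by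
  unfold stdNormalPDF
  positivity

lemma continuous_stdNormalPDF : Continuous stdNormalPDF := by
  unfold stdNormalPDF
  fun_prop

lemma integrable_stdNormalPDF : Integrable stdNormalPDF := by
  refine ((integrable_exp_neg_mul_sq one_half_pos).const_mul (√(2 * π))⁻¹).congr
    (Eventually.of_forall fun x => ?_)
  simp only [stdNormalPDF]
  ring_nf

lemma hasDerivAt_stdNormalPDF (x : ℝ) : HasDerivAt stdNormalPDF (-x * stdNormalPDF x) x := by
  have h := ((((hasDerivAt_id x).pow 2).neg.div_const 2).exp).const_mul (√(2 * π))⁻¹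
  refine h.congr_deriv ?_
  simp only [stdNormalPDF, Pi.neg_apply, Pi.pow_apply, id]
  push_cast
  ring

lemma tendsto_abs_rpow_mul_stdNormalPDF_cocompact (s : ℝ) :
    Tendsto (fun x => |x| ^ s * stdNormalPDF x) (cocompact ℝ) (𝓝 0) := by
  have h := (tendsto_rpow_abs_mul_exp_neg_mul_sq_cocompact one_half_pos s).const_mul
    (√(2 * π))⁻¹
  rw [mul_zero] at h
  refine h.congr fun x => ?_
  rw [stdNormalPDF]
  ring_nf

lemma tendsto_stdNormalPDF_cocompact : Tendsto stdNormalPDF (cocompact ℝ) (𝓝 0) := by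
  simpa using tendsto_abs_rpow_mul_stdNormalPDF_cocompact 0

lemma tendsto_mul_stdNormalPDF_cocompact :
    Tendsto (fun x => x * stdNormalPDF x) (cocompact ℝ) (𝓝 0) := by
  rw [tendsto_zero_iff_norm_tendsto_zero]
  simpa [abs_of_pos (stdNormalPDF_pos _)] using tendsto_abs_rpow_mul_stdNormalPDF_cocompact 1

lemma stdNormalCDF_pos (x : ℝ) : 0 < stdNormalCDF x := by
  rw [stdNormalCDF, setIntegral_pos_iff_support_of_nonneg_ae
    (Eventually.of_forall fun t => (stdNormalPDF_pos t).le) integrable_stdNormalPDF.integrableOn]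
  simp [Function.support, (stdNormalPDF_pos _).ne']

lemma hasDerivAt_stdNormalCDF (x : ℝ) : HasDerivAt stdNormalCDF (stdNormalPDF x) x := by
  have hsplit : ∀ y, stdNormalCDF y = stdNormalCDF 0 + ∫ t in (0 : ℝ)..y, stdNormalPDF t := by
    intro y
    rw [stdNormalCDF, stdNormalCDF, ← intervalIntegral.integral_Iic_sub_Iic
      integrable_stdNormalPDF.integrableOn integrable_stdNormalPDF.integrableOn]
    ring
  rw [funext hsplit]
  exact (continuous_stdNormalPDF.integral_hasStrictDerivAt 0 x).hasDerivAt.const_add _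

lemma tendsto_stdNormalCDF_atBot : Tendsto stdNormalCDF atBot (𝓝 0) :=
  tendsto_integral_Iic_zero tendsto_id

-- `0 ≤ millsDefect u` is the Mills-ratio bound `Φ u ≥ -u φ u / (1 + u²)` for `u < 0`.
noncomputable def millsDefect (u : ℝ) : ℝ := stdNormalCDF u + u * stdNormalPDF u / (1 + u ^ 2)

lemma hasDerivAt_millsDefect (u : ℝ) :
    HasDerivAt millsDefect (2 * stdNormalPDF u / (1 + u ^ 2) ^ 2) u := by
  have hden : HasDerivAt (fun u : ℝ => 1 + u ^ 2) (2 * u) u := by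
    simpa using ((hasDerivAt_id u).pow 2).const_add 1
  have h := (hasDerivAt_stdNormalCDF u).add
    (((hasDerivAt_id u).mul (hasDerivAt_stdNormalPDF u)).div hden (by positivity))
  refine h.congr_deriv ?_
  simp only [Pi.mul_apply, id]
  field_simp
  ring

lemma tendsto_millsDefect_atBot : Tendsto millsDefect atBot (𝓝 0) := by
  have hquot : Tendsto (fun u => u * stdNormalPDF u / (1 + u ^ 2)) atBot (𝓝 0) := by
    refine squeeze_zero_norm (a := fun u => ‖u * stdNormalPDF u‖) (fun u => ?_)
      (by simpa using (tendsto_mul_stdNormalPDF_cocompact.mono_left atBot_le_cocompact).norm)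
    rw [norm_div, Real.norm_of_nonneg (by positivity : (0 : ℝ) ≤ 1 + u ^ 2)]
    exact div_le_self (norm_nonneg _) (le_add_of_nonneg_right (sq_nonneg u))
  unfold millsDefect
  simpa using tendsto_stdNormalCDF_atBot.add hquot

lemma millsDefect_nonneg (u : ℝ) : 0 ≤ millsDefect u :=
  (monotone_of_hasDerivAt_nonneg hasDerivAt_millsDefect
    fun x => by have := stdNormalPDF_pos x; positivity).le_of_tendsto tendsto_millsDefect_atBot u

noncomputable def curvatureDefect (u : ℝ) : ℝ :=
  stdNormalCDF u ^ 2 - stdNormalPDF u ^ 2 - u * stdNormalPDF u * stdNormalCDF u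

lemma hasDerivAt_curvatureDefect (u : ℝ) :
    HasDerivAt curvatureDefect (stdNormalPDF u * (1 + u ^ 2) * millsDefect u) u := by
  have hΦ := hasDerivAt_stdNormalCDF u
  have hφ := hasDerivAt_stdNormalPDF u
  have h := ((hΦ.pow 2).sub (hφ.pow 2)).sub (((hasDerivAt_id u).mul hφ).mul hΦ)
  refine h.congr_deriv ?_
  simp only [millsDefect, Pi.mul_apply, id]
  field_simp
  ring

lemma tendsto_curvatureDefect_atBot : Tendsto curvatureDefect atBot (𝓝 0) := by
  have hφ := tendsto_stdNormalPDF_cocompact.mono_left atBot_le_cocompact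
  have huφ := tendsto_mul_stdNormalPDF_cocompact.mono_left atBot_le_cocompact
  have hΦ := tendsto_stdNormalCDF_atBot
  unfold curvatureDefect
  simpa using ((hΦ.pow 2).sub (hφ.pow 2)).sub (huφ.mul hΦ)

lemma curvatureDefect_nonneg (u : ℝ) : 0 ≤ curvatureDefect u :=
  (monotone_of_hasDerivAt_nonneg hasDerivAt_curvatureDefect fun x => by
    have := stdNormalPDF_pos x
    have := millsDefect_nonneg x
    positivity).le_of_tendsto tendsto_curvatureDefect_atBot u

lemma hasDerivAt_stdNormalPDF_div_stdNormalCDF_add (u : ℝ) :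
    HasDerivAt (fun u => stdNormalPDF u / stdNormalCDF u + u)
      (curvatureDefect u / stdNormalCDF u ^ 2) u := by
  have h := ((hasDerivAt_stdNormalPDF u).div (hasDerivAt_stdNormalCDF u)
    (stdNormalCDF_pos u).ne').add (hasDerivAt_id u)
  refine h.congr_deriv ?_
  have := (stdNormalCDF_pos u).ne'
  simp only [curvatureDefect]
  field_simp
  ring

lemma monotone_stdNormalPDF_div_stdNormalCDF_add :
    Monotone fun u => stdNormalPDF u / stdNormalCDF u + u :=
  monotone_of_hasDerivAt_nonneg hasDerivAt_stdNormalPDF_div_stdNormalCDF_add fun u =>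
    div_nonneg (curvatureDefect_nonneg u) (sq_nonneg _)

lemma hasDerivAt_log_stdNormalCDF_add_sq_div_two (u : ℝ) :
    HasDerivAt (fun u => log (stdNormalCDF u) + u ^ 2 / 2)
      (stdNormalPDF u / stdNormalCDF u + u) u := by
  have h := ((hasDerivAt_stdNormalCDF u).log (stdNormalCDF_pos u).ne').add
    (((hasDerivAt_id u).pow 2).div_const 2)
  refine h.congr_deriv ?_
  simp only [id]
  push_cast
  ring

theorem sub_le_log_stdNormalCDF_sub_log (u v : ℝ) :
    stdNormalPDF u / stdNormalCDF u * (v - u) - (v - u) ^ 2 / 2 ≤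
      log (stdNormalCDF v) - log (stdNormalCDF u) := by
  have h := mul_sub_le_sub_of_hasDerivAt_of_monotone hasDerivAt_log_stdNormalCDF_add_sq_div_two
    monotone_stdNormalPDF_div_stdNormalCDF_add u v
  linarith

theorem stmt4_general (σ : ℝ) (f : ℝ → ℝ) (hf : ∀ x, f x = stdNormalCDF (x / σ))
    (a b : ℝ) :
    Real.log (f b) - Real.log (f a) ≥
      (deriv f a / f a) * (b - a) - (1 / (2 * σ ^ 2)) * (b - a) ^ 2 := by
  obtain rfl : f = fun x => stdNormalCDF (x / σ) := funext hf
  have hderiv :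
      HasDerivAt (fun x => stdNormalCDF (x / σ)) (stdNormalPDF (a / σ) * (1 / σ)) a := by
    exact (hasDerivAt_stdNormalCDF (a / σ)).comp a ((hasDerivAt_id a).div_const σ)
  rw [hderiv.deriv]
  calc stdNormalPDF (a / σ) * (1 / σ) / stdNormalCDF (a / σ) * (b - a)
        - 1 / (2 * σ ^ 2) * (b - a) ^ 2
      = stdNormalPDF (a / σ) / stdNormalCDF (a / σ) * (b / σ - a / σ)
        - (b / σ - a / σ) ^ 2 / 2 := by ring
    _ ≤ _ := sub_le_log_stdNormalCDF_sub_log _ _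

/-- If `f` is the CDF of `N(0, σ²)`, then
`log f(b) - log f(a) ≥ (f'(a)/f(a)) (b - a) - (1/(2σ²)) (b - a)²`. -/
theorem stmt4 (σ : ℝ) (hσ : 0 < σ) (f : ℝ → ℝ) (hf : ∀ x, f x = stdNormalCDF (x / σ))
    (a b : ℝ) :
    Real.log (f b) - Real.log (f a) ≥
      (deriv f a / f a) * (b - a) - (1 / (2 * σ ^ 2)) * (b - a) ^ 2 :=
  stmt4_general σ f hf a b
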